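/- arXiv:1601.03472 — 3 statements merged into one kernel-verified Lean document; each statement's English description precedes it below -/
import Mathlib

section
/- Let K and L be simplicial complexes on disjoint finite index sets V and W with K ≠ Δ^V and L ≠ Δ^W. Then the Alexander dual of the join satisfies (K * L)*_{V ⊔ W} = (K*_V * Δ^W) ∪ (Δ^V * L*_W). -/
open Finset

variable {ι : Type*} [DecidableEq ι]

/-- `K` is a (finite) simplicial complex on the index set `V`: it contains the empty
simplex, all faces are subsets of `V`, and it is closed under passing to subsets. -/
def IsComplexOn (V : Finset ι) (K : Set (Finset ι)) : Prop :=
  ∅ ∈ K ∧ (∀ σ ∈ K, σ ⊆ V) ∧ ∀ σ ∈ K, ∀ τ ⊆ σ, τ ∈ K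

/-- The full simplex `Δ^V` on the index set `V`. -/
def fullSimplex (V : Finset ι) : Set (Finset ι) := {σ | σ ⊆ V}

/-- The boundary `∂Δ^V` of the full simplex on `V`. -/
def boundarySimplex (V : Finset ι) : Set (Finset ι) := {σ | σ ⊂ V}

/-- The Alexander dual `K*_V = {σ ⊆ V : V \ σ ∉ K}`. -/
def alexDual (V : Finset ι) (K : Set (Finset ι)) : Set (Finset ι) :=
  {σ | σ ⊆ V ∧ V \ σ ∉ K}

/-- The simplicial join `K * L = {σ ∪ τ : σ ∈ K, τ ∈ L}` (for complexes on disjoint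
index sets). -/
def sJoin (K L : Set (Finset ι)) : Set (Finset ι) :=
  {υ | ∃ σ ∈ K, ∃ τ ∈ L, υ = σ ∪ τ}

/-- A facet is a maximal face. -/
def IsFacet (K : Set (Finset ι)) (F : Finset ι) : Prop :=
  F ∈ K ∧ ∀ σ ∈ K, F ⊆ σ → σ = F

/-- A minimal non-face: `σ ∉ K` but every proper subset obtained by deleting a vertex
is a face. -/
def IsMinNonFace (K : Set (Finset ι)) (σ : Finset ι) : Prop :=
  σ ∉ K ∧ ∀ v ∈ σ, σ.erase v ∈ K

/-- The restriction (full subcomplex) `K_I`. -/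
def restrictC (K : Set (Finset ι)) (I : Finset ι) : Set (Finset ι) := {σ ∈ K | σ ⊆ I}

/-- The link `link_K(σ) = {τ ⊆ V \ σ : τ ∪ σ ∈ K}` of `σ` in a complex `K` on `V`. -/
def slink (V : Finset ι) (K : Set (Finset ι)) (σ : Finset ι) : Set (Finset ι) :=
  {τ | τ ⊆ V \ σ ∧ τ ∪ σ ∈ K}

/-- **Lemma 3.1.** For simplicial complexes `K ≠ Δ^V` and `L ≠ Δ^W` on disjoint index
sets `V` and `W`, `(K * L)*_{V ⊔ W} = (K*_V * Δ^W) ∪ (Δ^V * L*_W)`. -/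
theorem alexDual_sJoin (V W : Finset ι) (hVW : Disjoint V W)
    (K L : Set (Finset ι)) (hK : IsComplexOn V K) (hL : IsComplexOn W L)
    (hKne : K ≠ fullSimplex V) (hLne : L ≠ fullSimplex W) :
    alexDual (V ∪ W) (sJoin K L) =
      sJoin (alexDual V K) (fullSimplex W) ∪ sJoin (fullSimplex V) (alexDual W L) := by
  have hd : ∀ {x : ι}, x ∈ V → x ∉ W := fun hx => Finset.disjoint_left.mp hVW hx
  ext σ
  constructor
  · rintro ⟨hσ, hnm⟩
    have h1 : V \ (σ ∩ V) = V \ σ := by ext x; simp only [mem_sdiff, mem_inter, mem_union]; tauto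
    have h2 : W \ (σ ∩ W) = W \ σ := by ext x; simp only [mem_sdiff, mem_inter, mem_union]; tauto
    have h3 : (V ∪ W) \ σ = (V \ σ) ∪ (W \ σ) := by ext x; simp only [mem_sdiff, mem_inter, mem_union]; tauto
    have h4 : σ = σ ∩ V ∪ σ ∩ W := by
      ext x; simp only [mem_union, mem_inter]
      constructor
      · intro hx
        rcases mem_union.mp (hσ hx) with h | h
        · exact Or.inl ⟨hx, h⟩
        · exact Or.inr ⟨hx, h⟩
      · tauto
    by_cases hVK : V \ σ ∈ K
    · right
      refine ⟨σ ∩ V, inter_subset_right, σ ∩ W, ⟨inter_subset_right, ?_⟩, h4⟩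
      rw [h2]
      intro hWL
      exact hnm ⟨V \ σ, hVK, W \ σ, hWL, h3⟩
    · left
      exact ⟨σ ∩ V, ⟨inter_subset_right, by rw [h1]; exact hVK⟩,
        σ ∩ W, inter_subset_right, h4⟩
  · rintro (⟨a, ⟨haV, haK⟩, b, hbW, rfl⟩ | ⟨a, haV, b, ⟨hbW, hbL⟩, rfl⟩)
    · refine ⟨union_subset_union haV hbW, ?_⟩
      rintro ⟨c, hcK, d, hdL, heq⟩
      apply haK
      have hcV : c ⊆ V := hK.2.1 c hcK
      have hdW : d ⊆ W := hL.2.1 d hdL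
      have hc : c = V \ a := by
        ext x
        have h1 : x ∈ (V ∪ W) \ (a ∪ b) ↔ x ∈ c ∪ d := by rw [heq]
        simp only [mem_union, mem_sdiff] at h1
        simp only [mem_sdiff]
        constructor
        · intro hxc
          have hxV := hcV hxc
          have := (h1.mpr (Or.inl hxc)).2
          exact ⟨hxV, fun ha => this (Or.inl ha)⟩
        · rintro ⟨hxV, hxa⟩
          have hxb : x ∉ b := fun hxb => hd hxV (hbW hxb)
          rcases h1.mp ⟨Or.inl hxV, fun h => h.elim hxa hxb⟩ with h | h
          · exact h
          · exact absurd (hdW h) (hd hxV)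
      rw [← hc]; exact hcK
    · refine ⟨union_subset_union haV hbW, ?_⟩
      rintro ⟨c, hcK, d, hdL, heq⟩
      apply hbL
      have hcV : c ⊆ V := hK.2.1 c hcK
      have hdW : d ⊆ W := hL.2.1 d hdL
      have hc : d = W \ b := by
        ext x
        have h1 : x ∈ (V ∪ W) \ (a ∪ b) ↔ x ∈ c ∪ d := by rw [heq]
        simp only [mem_union, mem_sdiff] at h1
        simp only [mem_sdiff]
        constructor
        · intro hxd
          have hxW := hdW hxd
          have := (h1.mpr (Or.inr hxd)).2
          exact ⟨hxW, fun hb => this (Or.inr hb)⟩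
        · rintro ⟨hxW, hxb⟩
          have hxa : x ∉ a := fun hxa => hd (haV hxa) hxW
          rcases h1.mp ⟨Or.inr hxW, fun h => h.elim hxa hxb⟩ with h | h
          · exact absurd (hcV h) (fun hv => hd hv hxW)
          · exact h
      rw [← hc]; exact hdL
end

section
/- Let K be a simplicial complex on V ∪ W obtained by gluing complexes K₁ on V and K₂ on W along the common face α = V ∩ W (i.e. K = K₁ ∪ K₂ where K₁ ∩ K₂ = Δ^α), and let β ⊆ α be a face of α. Then link_K(β) = link_{K₁}(β) ∪ link_{K₂}(β), and link_{K₁}(β) ∩ link_{K₂}(β) = Δ^{α \ β}, i.e., the link decomposes as the gluing of the two links along the common face α \ β. -/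
open Finset

variable {ι : Type*} [DecidableEq ι]

/-- For a complex `K = K₁ ∪_α K₂` on `V ∪ W` glued along the common face `α = V ∩ W`
(`K₁ ∩ K₂ = Δ^α`) and any face `β ⊆ α`, the link decomposes:
`link_K(β) = link_{K₁}(β) ∪ link_{K₂}(β)`, glued along the common face `α \ β`
(`link_{K₁}(β) ∩ link_{K₂}(β) = Δ^{α\β}`). -/
theorem slink_union_glued (V W α β : Finset ι) (K K₁ K₂ : Set (Finset ι))
    (hK₁ : IsComplexOn V K₁) (hK₂ : IsComplexOn W K₂)
    (hα : α = V ∩ W) (hglue : K = K₁ ∪ K₂) (hint : K₁ ∩ K₂ = fullSimplex α)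
    (hβ : β ⊆ α) :
    slink (V ∪ W) K β = slink V K₁ β ∪ slink W K₂ β ∧
      slink V K₁ β ∩ slink W K₂ β = fullSimplex (α \ β) := by
  obtain ⟨-, hV, -⟩ := hK₁
  obtain ⟨-, hW, -⟩ := hK₂
  have hβV : β ⊆ V := hβ.trans (hα ▸ inter_subset_left)
  have hβW : β ⊆ W := hβ.trans (hα ▸ inter_subset_right)
  constructor
  · ext τ
    simp only [slink, hglue, Set.mem_setOf_eq, Set.mem_union]
    constructor
    · rintro ⟨hsub, h | h⟩
      · exact Or.inl ⟨fun x hx => mem_sdiff.2 ⟨(hV _ h) (mem_union_left _ hx),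
          (mem_sdiff.1 (hsub hx)).2⟩, h⟩
      · exact Or.inr ⟨fun x hx => mem_sdiff.2 ⟨(hW _ h) (mem_union_left _ hx),
          (mem_sdiff.1 (hsub hx)).2⟩, h⟩
    · rintro (⟨hsub, h⟩ | ⟨hsub, h⟩)
      · exact ⟨hsub.trans (sdiff_subset_sdiff subset_union_left le_rfl), Or.inl h⟩
      · exact ⟨hsub.trans (sdiff_subset_sdiff subset_union_right le_rfl), Or.inr h⟩
  · ext τ
    simp only [slink, Set.mem_inter_iff, Set.mem_setOf_eq, fullSimplex]
    constructor
    · rintro ⟨⟨h1, h2⟩, ⟨h3, h4⟩⟩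
      have : τ ∪ β ∈ K₁ ∩ K₂ := ⟨h2, h4⟩
      rw [hint] at this
      intro x hx
      exact mem_sdiff.2 ⟨this (mem_union_left _ hx), (mem_sdiff.1 (h1 hx)).2⟩
    · intro h
      have hτV : τ ⊆ V \ β := h.trans (sdiff_subset_sdiff (hα ▸ inter_subset_left) le_rfl)
      have hτW : τ ⊆ W \ β := h.trans (sdiff_subset_sdiff (hα ▸ inter_subset_right) le_rfl)
      have hmem : τ ∪ β ∈ K₁ ∩ K₂ := by
        rw [hint]
        exact union_subset (h.trans sdiff_subset) hβ
      exact ⟨⟨hτV, hmem.1⟩, ⟨hτW, hmem.2⟩⟩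
end

section
/- (Multigraded Hochster formula) For a simplicial complex K on [m], a field k, and any subset I ⊆ [m] viewed as a (0,1)-vector: Tor^{k[v₁,…,v_m]}_{i, 2I}(k[K], k) ≅ H̃^{|I|−i−1}(K_I; k), and Tor^{k[v₁,…,v_m]}_{i, 2a}(k[K], k) = 0 whenever a ∈ ℕ^m is not a (0,1)-vector. -/
open Finset

attribute [local instance] Classical.propDecidable

/-- Quotient of a module by a submodule. -/
abbrev modQuot {k : Type} [Field k] {M : Type} [AddCommGroup M] [Module k M]
    (p : Submodule k M) : Type := M ⧸ p

variable (k : Type) [Field k] {m : ℕ}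

/-- The support of an exponent vector `a ∈ ℕ^m`. -/
def nsupp {m : ℕ} (a : Fin m → ℕ) : Finset (Fin m) :=
  Finset.univ.filter fun i => a i ≠ 0

/-- The characteristic `(0,1)`-vector of a subset `J ⊆ [m]`. -/
def chi {m : ℕ} (J : Finset (Fin m)) : Fin m → ℕ := fun i => if i ∈ J then 1 else 0

/-- The basis of the multidegree-`2b` part of homological degree `i` of the Koszul
complex `Λ[u₁,…,u_m] ⊗ k[K]`: monomials `u_J v^{b−χ_J}` with `|J| = i`, `χ_J ≤ b`,
and `v^{b−χ_J} ≠ 0` in the Stanley–Reisner ring `k[K]`, i.e. `supp (b−χ_J) ∈ K`. -/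
def KB (K : Set (Finset (Fin m))) (b : Fin m → ℕ) (i : ℕ) : Type :=
  {J : Finset (Fin m) // J.card = i ∧ (∀ j ∈ J, 1 ≤ b j) ∧
    nsupp (fun x => b x - chi J x) ∈ K}

/-- The multidegree-`2b`, homological degree-`i` component of the Koszul complex. -/
abbrev KCh (K : Set (Finset (Fin m))) (b : Fin m → ℕ) (i : ℕ) : Type := KB K b i → k

/-- The Koszul differential `d(u_J v^a) = ∑_{j∈J} ± u_{J∖j} v^{a+e_j}` in multidegree
`2b` (a summand is `0` in the Stanley–Reisner ring when `supp (b − χ_{J∖j}) ∉ K`). -/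
noncomputable def dK (K : Set (Finset (Fin m))) (b : Fin m → ℕ) (i : ℕ) :
    KCh k K b (i + 1) →ₗ[k] KCh k K b i :=
  LinearMap.pi fun J' =>
    ∑ j ∈ (Finset.univ \ J'.1).attach,
      if h : 1 ≤ b j.1 ∧ nsupp (fun x => b x - chi (insert j.1 J'.1) x) ∈ K then
        ((-1 : k) ^ (J'.1.filter fun y => y < j.1).card) •
          LinearMap.proj
            (⟨insert j.1 J'.1, by
              have hj : j.1 ∉ J'.1 := (Finset.mem_sdiff.mp j.2).2
              refine ⟨?_, ?_, h.2⟩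
              · rw [Finset.card_insert_of_notMem hj, J'.2.1]
              · intro x hx
                rcases Finset.mem_insert.mp hx with rfl | hx'
                · exact h.1
                · exact J'.2.2.1 x hx'⟩ : KB K b (i + 1))
      else 0

/-- The outgoing Koszul differential (zero in homological degree `0`). -/
noncomputable def dDownK (K : Set (Finset (Fin m))) (b : Fin m → ℕ) :
    ∀ i : ℕ, KCh k K b i →ₗ[k] KCh k K b (i - 1)
  | 0 => 0
  | (n + 1) => dK k K b n

/-- `Tor^{k[v₁,…,v_m]}_{i,2b}(k[K], k)`: the homology of the multidegree-`2b` part of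
the Koszul complex, in homological degree `i`. -/
abbrev TorMulti (K : Set (Finset (Fin m))) (b : Fin m → ℕ) (i : ℕ) : Type :=
  modQuot (Submodule.comap (LinearMap.ker (dDownK k K b i)).subtype
    (LinearMap.range (dK k K b i)))

/-- Basis of the (augmented) simplicial cochain complex of `L` in cohomological degree
`q`: the faces of `L` of cardinality `q + 1` (so `q = -1` corresponds to the empty
face, giving *reduced* cohomology). -/
def CB (L : Set (Finset (Fin m))) (q : ℤ) : Type :=
  {σ : Finset (Fin m) // σ ∈ L ∧ (σ.card : ℤ) = q + 1}

/-- Simplicial cochains with coefficients in `k`. -/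
abbrev CoCh (L : Set (Finset (Fin m))) (q : ℤ) : Type := CB L q → k

/-- The simplicial coboundary map `(δf)(τ) = ∑_{v∈τ} ± f(τ ∖ v)`. -/
noncomputable def deltaC (L : Set (Finset (Fin m))) (q : ℤ) :
    CoCh k L q →ₗ[k] CoCh k L (q + 1) :=
  LinearMap.pi fun τ =>
    ∑ v ∈ τ.1.attach,
      if h : τ.1.erase v.1 ∈ L then
        ((-1 : k) ^ (τ.1.filter fun y => y < v.1).card) •
          LinearMap.proj
            (⟨τ.1.erase v.1, h, by
              have h2 := τ.2.2
              have h4 : 1 ≤ τ.1.card := Finset.card_pos.mpr ⟨v.1, v.2⟩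
              rw [Finset.card_erase_of_mem v.2]
              omega⟩ : CB L q)
      else 0

/-- Transport of graded components along an equality of degrees. -/
noncomputable def gcastk {M : ℤ → Type} [∀ p, AddCommGroup (M p)]
    [∀ p, Module k (M p)] {p q : ℤ} (h : p = q) : M p →ₗ[k] M q := by
  subst h; exact LinearMap.id

/-- The reduced simplicial cohomology `H̃^q(L; k)`, computed from the augmented
cochain complex (`H̃^{-1}` of the empty complex `{∅}` is `k`). -/
abbrev HredC (L : Set (Finset (Fin m))) (q : ℤ) : Type :=
  modQuot (Submodule.comap (LinearMap.ker (deltaC k L q)).subtype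
    (LinearMap.range ((gcastk k (M := CoCh k L) (show q - 1 + 1 = q by ring)) ∘ₗ
      deltaC k L (q - 1))))

/-!
In multidegree `2b` the Koszul complex has the basis `u_J v^{b - χ_J}`. If `b x ≥ 2`, adding
`x` to or removing it from `J` does not change whether `v^{b - χ_J}` survives in `k[K]`, so
`u_J v^a ↦ ± u_{J ∪ x} v^{a - e_x}` is a contracting homotopy and `Tor` vanishes. If `b = χ_I`,
then `J ↦ I \ J` matches the basis in homological degree `i` with the faces of `K_I` of
cardinality `|I| - i`; twisted by the signs `∏_{y ∈ σ} (-1)^{#{z ∈ I | z < y}}` it becomes an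
isomorphism of the Koszul complex with the augmented cochain complex of `K_I`.
-/

section Subquotient

variable {R M N M' N' : Type} [Ring R] [AddCommGroup M] [Module R M] [AddCommGroup N]
  [Module R N] [AddCommGroup M'] [Module R M'] [AddCommGroup N'] [Module R N']

lemma subsingleton_quotient_comap_subtype {P Q : Submodule R M} (h : P ≤ Q) :
    Subsingleton (P ⧸ Q.comap P.subtype) :=
  Submodule.Quotient.subsingleton_iff.mpr (Submodule.comap_subtype_eq_top.mpr h)

lemma nonempty_quotient_comap_subtype_equiv (e : M ≃ₗ[R] N) {P Q : Submodule R M}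
    {P' Q' : Submodule R N} (hP : P.map (e : M →ₗ[R] N) = P')
    (hQ : Q.map (e : M →ₗ[R] N) = Q') :
    Nonempty ((P ⧸ Q.comap P.subtype) ≃ₗ[R] (P' ⧸ Q'.comap P'.subtype)) := by
  subst hP hQ
  refine ⟨Submodule.Quotient.equiv _ _ (e.submoduleMap P) ?_⟩
  ext ⟨x, hx⟩
  simp

lemma map_range_eq_of_comp_eq (e : M ≃ₗ[R] N) (e' : M' ≃ₗ[R] N') {f : M' →ₗ[R] M}
    {f' : N' →ₗ[R] N} (h : e.toLinearMap ∘ₗ f = f' ∘ₗ e'.toLinearMap) :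
    (LinearMap.range f).map (e : M →ₗ[R] N) = LinearMap.range f' := by
  rw [← LinearMap.range_comp, h, LinearMap.range_comp_of_range_eq_top _ e'.range]

lemma map_ker_eq_of_comp_eq (e : M ≃ₗ[R] N) (e' : M' ≃ₗ[R] N') {g : M →ₗ[R] M'}
    {g' : N →ₗ[R] N'} (h : e'.toLinearMap ∘ₗ g = g' ∘ₗ e.toLinearMap) :
    (LinearMap.ker g).map (e : M →ₗ[R] N) = LinearMap.ker g' := by
  ext x
  have hx := LinearMap.congr_fun h (e.symm x)
  simp only [LinearMap.coe_comp, Function.comp_apply, LinearEquiv.coe_coe,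
    LinearEquiv.apply_symm_apply] at hx
  simp [Submodule.map_equiv_eq_comap_symm, ← hx]

end Subquotient

section Signs

def koszulSign (s : Finset (Fin m)) (x : Fin m) : k := (-1) ^ #{y ∈ s | y < x}

lemma koszulSign_mul_self (s : Finset (Fin m)) (x : Fin m) :
    koszulSign k s x * koszulSign k s x = 1 := by
  rw [koszulSign, ← pow_add, ← two_mul, pow_mul, neg_one_sq, one_pow]

lemma koszulSign_insert {s : Finset (Fin m)} {j : Fin m} (hj : j ∉ s) (x : Fin m) :
    koszulSign k (insert j s) x = (if j < x then -1 else 1) * koszulSign k s x := by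
  unfold koszulSign
  rw [filter_insert]
  split_ifs
  · rw [card_insert_of_notMem (by simp [hj]), pow_succ, mul_comm]
  · rw [one_mul]

lemma koszulSign_insert_self (s : Finset (Fin m)) (x : Fin m) :
    koszulSign k (insert x s) x = koszulSign k s x := by
  simp [koszulSign, filter_insert]

lemma koszulSign_erase_self (s : Finset (Fin m)) (x : Fin m) :
    koszulSign k (s.erase x) x = koszulSign k s x := by
  simp [koszulSign, filter_erase]

lemma koszulSign_union {s t : Finset (Fin m)} (h : Disjoint s t) (x : Fin m) :
    koszulSign k (s ∪ t) x = koszulSign k s x * koszulSign k t x := by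
  rw [koszulSign, filter_union, card_union_of_disjoint
    (disjoint_filter_filter h), pow_add]
  rfl

lemma koszulSign_mul_koszulSign_insert {s : Finset (Fin m)} {j x : Fin m} (hjs : j ∉ s)
    (hxs : x ∈ s) (hjx : j ≠ x) :
    koszulSign k s j * koszulSign k (insert j s) x
      = -(koszulSign k s x * koszulSign k (s.erase x) j) := by
  have hj : koszulSign k s j = (if x < j then -1 else 1) * koszulSign k (s.erase x) j := by
    rw [← koszulSign_insert k (notMem_erase x s), insert_erase hxs]
  rw [hj, koszulSign_insert k hjs]
  rcases hjx.lt_or_gt with h | h <;> simp [h, h.not_gt] <;> ring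

end Signs

lemma mem_nsupp {a : Fin m → ℕ} {y : Fin m} : y ∈ nsupp a ↔ a y ≠ 0 := by
  simp [nsupp]

abbrev MemKB (K : Set (Finset (Fin m))) (b : Fin m → ℕ) (i : ℕ) (J : Finset (Fin m)) : Prop :=
  J.card = i ∧ (∀ j ∈ J, 1 ≤ b j) ∧ nsupp (fun x => b x - chi J x) ∈ K

namespace KCh

variable {K : Set (Finset (Fin m))} {b : Fin m → ℕ} {i : ℕ}

noncomputable def extendByZero : KCh k K b i →ₗ[k] Finset (Fin m) → k where
  toFun f J := if h : MemKB K b i J then f ⟨J, h⟩ else 0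
  map_add' f g := funext fun J => by
    by_cases h : MemKB K b i J
    · simp only [Pi.add_apply, dif_pos h]; rfl
    · simp only [Pi.add_apply, dif_neg h, add_zero]
  map_smul' c f := funext fun J => by
    by_cases h : MemKB K b i J
    · simp only [Pi.smul_apply, dif_pos h]; rfl
    · simp only [Pi.smul_apply, dif_neg h, smul_zero]

variable (f : KCh k K b i)

lemma extendByZero_of_mem {J : Finset (Fin m)} (h : MemKB K b i J) :
    extendByZero k f J = f ⟨J, h⟩ := dif_pos h

lemma extendByZero_coe (J : KB K b i) : extendByZero k f J.1 = f J :=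
  extendByZero_of_mem k f J.2

lemma extendByZero_of_notMem {J : Finset (Fin m)} (h : ¬ MemKB K b i J) :
    extendByZero k f J = 0 := dif_neg h

lemma extendByZero_of_card_ne {J : Finset (Fin m)} (h : J.card ≠ i) : extendByZero k f J = 0 :=
  extendByZero_of_notMem k f fun hJ => h hJ.1

end KCh

namespace CoCh

variable {L : Set (Finset (Fin m))} {q : ℤ}

noncomputable def extendByZero : CoCh k L q →ₗ[k] Finset (Fin m) → k where
  toFun g σ := if h : σ ∈ L ∧ (σ.card : ℤ) = q + 1 then g ⟨σ, h⟩ else 0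
  map_add' f g := funext fun σ => by
    by_cases h : σ ∈ L ∧ (σ.card : ℤ) = q + 1
    · simp only [Pi.add_apply, dif_pos h]; rfl
    · simp only [Pi.add_apply, dif_neg h, add_zero]
  map_smul' c f := funext fun σ => by
    by_cases h : σ ∈ L ∧ (σ.card : ℤ) = q + 1
    · simp only [Pi.smul_apply, dif_pos h]; rfl
    · simp only [Pi.smul_apply, dif_neg h, smul_zero]

variable (g : CoCh k L q)

lemma extendByZero_of_mem {σ : Finset (Fin m)} (h : σ ∈ L ∧ (σ.card : ℤ) = q + 1) :
    extendByZero k g σ = g ⟨σ, h⟩ := dif_pos h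

lemma extendByZero_coe (σ : CB L q) : extendByZero k g σ.1 = g σ := extendByZero_of_mem k g σ.2

lemma extendByZero_of_notMem {σ : Finset (Fin m)} (h : ¬ (σ ∈ L ∧ (σ.card : ℤ) = q + 1)) :
    extendByZero k g σ = 0 := dif_neg h

end CoCh

-- Summing over all of `Fin m` is harmless: a term whose index set has the wrong cardinality
-- is zero.
lemma dK_apply {K : Set (Finset (Fin m))} {b : Fin m → ℕ} {i : ℕ} (f : KCh k K b (i + 1))
    (J : KB K b i) :
    dK k K b i f J = ∑ j, koszulSign k J.1 j * KCh.extendByZero k f (insert j J.1) := by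
  rw [← sum_subset (subset_univ (univ \ J.1)), ← sum_attach (univ \ J.1)]
  · simp only [dK, LinearMap.pi_apply, LinearMap.sum_apply]
    refine sum_congr rfl fun j _ => ?_
    split_ifs with h
    · rw [KCh.extendByZero_of_mem k f]
      rfl
    · rw [KCh.extendByZero_of_notMem k f fun h' => h ⟨h'.2.1 _ (mem_insert_self _ _), h'.2.2⟩]
      simp
  · intro j _ hj
    rw [mem_sdiff, not_and_not_right] at hj
    rw [KCh.extendByZero_of_card_ne k f
      (by rw [insert_eq_of_mem (hj (mem_univ j)), J.2.1]; omega), mul_zero]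

lemma deltaC_apply {L : Set (Finset (Fin m))} {q : ℤ} (g : CoCh k L q) (τ : CB L (q + 1)) :
    deltaC k L q g τ = ∑ v, koszulSign k τ.1 v * CoCh.extendByZero k g (τ.1.erase v) := by
  rw [← sum_subset (subset_univ τ.1), ← sum_attach τ.1]
  · simp only [deltaC, LinearMap.pi_apply, LinearMap.sum_apply]
    refine sum_congr rfl fun v _ => ?_
    split_ifs with h
    · rw [CoCh.extendByZero_of_mem k g]
      rfl
    · rw [CoCh.extendByZero_of_notMem k g fun h' => h h'.1]
      simp
  · intro v _ hv
    rw [CoCh.extendByZero_of_notMem k g fun h => by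
      have := τ.2.2; rw [erase_eq_of_notMem hv] at h; omega, mul_zero]

section Homotopy

variable {K : Set (Finset (Fin m))} {b : Fin m → ℕ} {x : Fin m}

lemma nsupp_sub_chi_erase (hx : 2 ≤ b x) (T : Finset (Fin m)) :
    nsupp (fun y => b y - chi (T.erase x) y) = nsupp (fun y => b y - chi T y) := by
  ext y
  simp only [mem_nsupp, chi, mem_erase]
  by_cases hy : y = x
  · subst hy
    split_ifs <;> omega
  · simp [hy]

lemma memKB_erase_iff (hx : 2 ≤ b x) {T : Finset (Fin m)} (hxT : x ∈ T) {i : ℕ} :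
    MemKB K b i (T.erase x) ↔ MemKB K b (i + 1) T := by
  unfold MemKB
  rw [card_erase_of_mem hxT, nsupp_sub_chi_erase hx]
  have hT := card_pos.mpr ⟨x, hxT⟩
  refine and_congr (by omega) (and_congr_left fun _ => ⟨fun h j hj => ?_,
    fun h j hj => h j (mem_of_mem_erase hj)⟩)
  by_cases hjx : j = x
  · subst hjx; omega
  · exact h j (mem_erase.mpr ⟨hjx, hj⟩)

noncomputable def koszulHomotopy (x : Fin m) {i : ℕ} (f : KCh k K b i) (J : KB K b (i + 1)) :
    k :=
  koszulSign k J.1 x * KCh.extendByZero k f (J.1.erase x)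

lemma extendByZero_koszulHomotopy (hx : 2 ≤ b x) {i : ℕ} (f : KCh k K b i)
    (T : Finset (Fin m)) :
    KCh.extendByZero k (koszulHomotopy k x f) T
      = if x ∈ T then koszulSign k T x * KCh.extendByZero k f (T.erase x) else 0 := by
  by_cases hT : MemKB K b (i + 1) T
  · rw [KCh.extendByZero_of_mem k (koszulHomotopy k x f) hT]
    split_ifs with hxT
    · rfl
    · simp only [koszulHomotopy]
      rw [erase_eq_of_notMem hxT,
        KCh.extendByZero_of_card_ne k f (by rw [hT.1]; omega), mul_zero]
  · rw [KCh.extendByZero_of_notMem k (koszulHomotopy k x f) hT]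
    split_ifs with hxT
    · rw [KCh.extendByZero_of_notMem k f (mt (memKB_erase_iff hx hxT).mp hT), mul_zero]
    · rfl

lemma dK_koszulHomotopy_apply_of_notMem (hx : 2 ≤ b x) {i : ℕ} (f : KCh k K b i)
    (J : KB K b i) (hxJ : x ∉ J.1) : dK k K b i (koszulHomotopy k x f) J = f J := by
  rw [dK_apply, sum_eq_single x]
  · rw [extendByZero_koszulHomotopy k hx, if_pos (mem_insert_self x J.1), erase_insert hxJ,
      koszulSign_insert_self, ← mul_assoc, koszulSign_mul_self, one_mul,
      KCh.extendByZero_coe k f J]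
  · intro j _ hjx
    rw [extendByZero_koszulHomotopy k hx, if_neg (by simp [hxJ, Ne.symm hjx]), mul_zero]
  · exact fun h => absurd (mem_univ x) h

lemma dK_koszulHomotopy_add_koszulHomotopy_dK_apply (hx : 2 ≤ b x) {i : ℕ}
    (f : KCh k K b (i + 1)) (J : KB K b (i + 1)) (hxJ : x ∈ J.1) :
    dK k K b (i + 1) (koszulHomotopy k x f) J + koszulHomotopy k x (dK k K b i f) J = f J := by
  have hJx : MemKB K b i (J.1.erase x) := (memKB_erase_iff hx hxJ).mpr J.2
  rw [koszulHomotopy, KCh.extendByZero_of_mem k (dK k K b i f) hJx, dK_apply,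
    dK_apply k f ⟨_, hJx⟩, mul_sum, ← sum_add_distrib, sum_eq_single x]
  · rw [insert_eq_of_mem hxJ, KCh.extendByZero_of_card_ne k _ (by rw [J.2.1]; omega),
      insert_erase hxJ, koszulSign_erase_self, ← mul_assoc, koszulSign_mul_self, mul_zero,
      zero_add, one_mul, KCh.extendByZero_coe k f J]
  · intro j _ hjx
    by_cases hjJ : j ∈ J.1
    · rw [insert_eq_of_mem hjJ, insert_eq_of_mem (mem_erase.mpr ⟨hjx, hjJ⟩),
        KCh.extendByZero_of_card_ne k _ (by rw [J.2.1]; omega),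
        KCh.extendByZero_of_card_ne k f (by rw [hJx.1]; omega)]
      ring
    · rw [extendByZero_koszulHomotopy k hx, if_pos (mem_insert_of_mem hxJ),
        erase_insert_of_ne hjx, ← mul_assoc, ← mul_assoc, ← add_mul,
        koszulSign_mul_koszulSign_insert k hjJ hxJ hjx, neg_add_cancel, zero_mul]
  · exact fun h => absurd (mem_univ x) h

lemma mem_range_dK_of_dDownK_eq_zero (hx : 2 ≤ b x) {i : ℕ} {y : KCh k K b i}
    (hy : dDownK k K b i y = 0) : y ∈ LinearMap.range (dK k K b i) := by
  refine ⟨koszulHomotopy k x y, funext fun J => ?_⟩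
  by_cases hxJ : x ∈ J.1
  · cases i with
    | zero => simp [card_eq_zero.mp J.2.1] at hxJ
    | succ n =>
      have h := dK_koszulHomotopy_add_koszulHomotopy_dK_apply k hx y J hxJ
      rwa [koszulHomotopy, show dK k K b n y = 0 from hy, map_zero, Pi.zero_apply, mul_zero,
        add_zero] at h
  · exact dK_koszulHomotopy_apply_of_notMem k hx y J hxJ

end Homotopy

lemma subsingleton_torMulti_of_two_le {K : Set (Finset (Fin m))} {a : Fin m → ℕ} {x : Fin m}
    (hx : 2 ≤ a x) (i : ℕ) : Subsingleton (TorMulti k K a i) :=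
  subsingleton_quotient_comap_subtype fun _ hy => mem_range_dK_of_dDownK_eq_zero k hx hy

lemma gcastk_apply {L : Set (Finset (Fin m))} {p q : ℤ} (h : p = q) (g : CoCh k L p)
    (τ : CB L q) : gcastk k (M := CoCh k L) h g τ = g ⟨τ.1, h ▸ τ.2⟩ := by
  subst h
  rfl

noncomputable def hochsterSign (I σ : Finset (Fin m)) : k := ∏ y ∈ σ, koszulSign k I y

lemma hochsterSign_mul_self (I σ : Finset (Fin m)) :
    hochsterSign k I σ * hochsterSign k I σ = 1 := by
  rw [hochsterSign, ← prod_mul_distrib]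
  exact prod_eq_one fun y _ => koszulSign_mul_self k I y

lemma hochsterSign_mul_koszulSign_sdiff {I τ : Finset (Fin m)} (hτ : τ ⊆ I) {j : Fin m}
    (hj : j ∈ τ) :
    hochsterSign k I τ * koszulSign k (I \ τ) j
      = koszulSign k τ j * hochsterSign k I (τ.erase j) := by
  have hI : koszulSign k I j = koszulSign k (I \ τ) j * koszulSign k τ j := by
    rw [← koszulSign_union k sdiff_disjoint, sdiff_union_of_subset hτ]
  rw [hochsterSign, ← mul_prod_erase τ _ hj, hI, ← hochsterSign]
  linear_combination (koszulSign k τ j * hochsterSign k I (τ.erase j)) *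
    koszulSign_mul_self k (I \ τ) j

lemma nsupp_chi_sub_chi (I J : Finset (Fin m)) :
    nsupp (fun x => chi I x - chi J x) = I \ J := by
  ext y
  by_cases h1 : y ∈ I <;> by_cases h2 : y ∈ J <;> simp [mem_nsupp, chi, h1, h2]

lemma memKB_chi_iff {K : Set (Finset (Fin m))} {I J : Finset (Fin m)} {i : ℕ} :
    MemKB K (chi I) i J ↔ J.card = i ∧ J ⊆ I ∧ I \ J ∈ K := by
  refine and_congr_right fun _ => and_congr (forall₂_congr fun j _ => ?_) ?_
  · by_cases hj : j ∈ I <;> simp [chi, hj]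
  · rw [nsupp_chi_sub_chi]

section Hochster

variable (K : Set (Finset (Fin m))) (I : Finset (Fin m))

noncomputable def hochsterEquiv (i : ℕ) (p : ℤ) (hp : p = I.card - i - 1) :
    KCh k K (chi I) i ≃ₗ[k] CoCh k {σ ∈ K | σ ⊆ I} p where
  toFun f σ := hochsterSign k I σ.1 * KCh.extendByZero k f (I \ σ.1)
  invFun g J := hochsterSign k I (I \ J.1) * CoCh.extendByZero k g (I \ J.1)
  map_add' f g := by
    funext σ
    simp only [map_add, Pi.add_apply, mul_add]
  map_smul' c f := by
    funext σ
    simp only [map_smul, Pi.smul_apply, smul_eq_mul, RingHom.id_apply]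
    ring
  left_inv f := by
    funext J
    obtain ⟨hcard, hJI, hK⟩ := memKB_chi_iff.mp J.2
    have hσ : I \ J.1 ∈ {σ ∈ K | σ ⊆ I} ∧ ((I \ J.1).card : ℤ) = p + 1 := by
      refine ⟨⟨hK, sdiff_subset⟩, ?_⟩
      have := card_le_card hJI
      rw [card_sdiff_of_subset hJI, hp]
      omega
    dsimp only
    rw [CoCh.extendByZero_of_mem k _ hσ]
    dsimp only
    rw [Finset.sdiff_sdiff_eq_self hJI, KCh.extendByZero_coe, ← mul_assoc,
      hochsterSign_mul_self, one_mul]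
  right_inv g := by
    funext σ
    obtain ⟨⟨hK, hσI⟩, hcard⟩ := σ.2
    have hJ : MemKB K (chi I) i (I \ σ.1) := by
      refine memKB_chi_iff.mpr ⟨?_, sdiff_subset, by rwa [Finset.sdiff_sdiff_eq_self hσI]⟩
      have := card_le_card hσI
      rw [card_sdiff_of_subset hσI]
      omega
    dsimp only
    rw [KCh.extendByZero_of_mem k _ hJ]
    dsimp only
    rw [Finset.sdiff_sdiff_eq_self hσI, CoCh.extendByZero_coe, ← mul_assoc,
      hochsterSign_mul_self, one_mul]

lemma extendByZero_hochsterEquiv {i : ℕ} {p : ℤ} (hp : p = I.card - i - 1)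
    (f : KCh k K (chi I) i) {σ : Finset (Fin m)} (hσI : σ ⊆ I) :
    CoCh.extendByZero k (hochsterEquiv k K I i p hp f) σ
      = hochsterSign k I σ * KCh.extendByZero k f (I \ σ) := by
  by_cases hσ : σ ∈ {σ ∈ K | σ ⊆ I} ∧ (σ.card : ℤ) = p + 1
  · rw [CoCh.extendByZero_of_mem k _ hσ]
    rfl
  · rw [CoCh.extendByZero_of_notMem k _ hσ, KCh.extendByZero_of_notMem k f, mul_zero]
    intro h
    obtain ⟨hcard, -, hK⟩ := memKB_chi_iff.mp h
    rw [Finset.sdiff_sdiff_eq_self hσI] at hK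
    refine hσ ⟨⟨hK, hσI⟩, ?_⟩
    have := card_le_card hσI
    rw [card_sdiff_of_subset hσI] at hcard
    omega

lemma hochsterEquiv_dK {i : ℕ} {p q : ℤ} (hp : p = I.card - (i + 1 : ℕ) - 1)
    (hq : q = I.card - i - 1) (hpq : p + 1 = q) (f : KCh k K (chi I) (i + 1)) :
    hochsterEquiv k K I i q hq (dK k K (chi I) i f)
      = gcastk k (M := CoCh k {σ ∈ K | σ ⊆ I}) hpq
          (deltaC k _ p (hochsterEquiv k K I (i + 1) p hp f)) := by
  funext τ
  obtain ⟨⟨hK, hτI⟩, hcard⟩ := τ.2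
  have hJ : MemKB K (chi I) i (I \ τ.1) := by
    refine memKB_chi_iff.mpr ⟨?_, sdiff_subset, by rwa [Finset.sdiff_sdiff_eq_self hτI]⟩
    have := card_le_card hτI
    rw [card_sdiff_of_subset hτI]
    omega
  rw [gcastk_apply, deltaC_apply k _ ⟨τ.1, hpq ▸ τ.2⟩]
  change hochsterSign k I τ.1 * KCh.extendByZero k (dK k K (chi I) i f) (I \ τ.1) = _
  rw [KCh.extendByZero_of_mem k _ hJ, dK_apply k f ⟨_, hJ⟩, mul_sum]
  refine sum_congr rfl fun j _ => ?_
  rw [extendByZero_hochsterEquiv k K I hp f ((erase_subset j τ.1).trans hτI)]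
  by_cases hjτ : j ∈ τ.1
  · rw [← Finset.sdiff_erase (hτI hjτ), ← mul_assoc,
      hochsterSign_mul_koszulSign_sdiff k hτI hjτ, mul_assoc]
  · have hF : KCh.extendByZero k f (insert j (I \ τ.1)) = 0 := by
      by_cases hjI : j ∈ I
      · rw [insert_eq_of_mem (mem_sdiff.mpr ⟨hjI, hjτ⟩)]
        exact KCh.extendByZero_of_card_ne k f (by rw [hJ.1]; omega)
      · exact KCh.extendByZero_of_notMem k f
          fun h => hjI ((memKB_chi_iff.mp h).2.1 (mem_insert_self _ _))
    rw [erase_eq_of_notMem hjτ, KCh.extendByZero_of_card_ne k f (J := I \ τ.1)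
      (by rw [hJ.1]; omega), hF]
    simp

lemma nonempty_torMulti_chi_equiv (i : ℕ) :
    Nonempty (TorMulti k K (chi I) i ≃ₗ[k] HredC k {σ ∈ K | σ ⊆ I} (I.card - i - 1)) := by
  refine nonempty_quotient_comap_subtype_equiv (hochsterEquiv k K I i _ rfl) ?_ ?_
  · cases i with
    | zero =>
      have hδ : deltaC k {σ ∈ K | σ ⊆ I} (I.card - (0 : ℕ) - 1) = 0 := by
        ext g τ
        obtain ⟨⟨-, hτI⟩, hcard⟩ := τ.2
        have := card_le_card hτI
        omega
      rw [hδ, LinearMap.ker_zero]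
      simp [dDownK]
    | succ n =>
      exact map_ker_eq_of_comp_eq _ (hochsterEquiv k K I n _ (by push_cast; ring))
        (LinearMap.ext fun f => hochsterEquiv_dK k K I rfl (by push_cast; ring) rfl f)
  · exact map_range_eq_of_comp_eq _ (hochsterEquiv k K I (i + 1) _ (by push_cast; ring))
      (LinearMap.ext fun f => hochsterEquiv_dK k K I _ rfl (by ring) f)

end Hochster

theorem multigraded_hochster_formula {m : ℕ} (K : Set (Finset (Fin m))) :
    (∀ (I : Finset (Fin m)) (i : ℕ),
      Nonempty (TorMulti k K (fun x => if x ∈ I then 1 else 0) i ≃ₗ[k]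
        HredC k {σ ∈ K | σ ⊆ I} ((I.card : ℤ) - i - 1))) ∧
    ∀ (a : Fin m → ℕ) (i : ℕ), (¬ ∀ x, a x ≤ 1) → Subsingleton (TorMulti k K a i) := by
  refine ⟨nonempty_torMulti_chi_equiv k K, fun a i ha => ?_⟩
  obtain ⟨x, hx⟩ := not_forall.mp ha
  exact subsingleton_torMulti_of_two_le k (by omega : 2 ≤ a x) i
end
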